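/- arXiv:1708.00240 — 2 statements merged into one kernel-verified Lean document; each statement's English description precedes it below -/
import Mathlib

section
/- Let G₁ and G₂ be vertex-disjoint graphs with distinguished vertices s₁,t₁ ∈ V₁ and s₂,t₂ ∈ V₂, and let G be obtained by identifying s₁ with s₂ and t₁ with t₂ (the parallel operation). Then γ_m(G) ≤ γ_m(G₁) + γ_m(G₂). -/
/-- `touches G r s` : r and s are adjacent or incident elements of V ∪ E. -/
def touches {V : Type*} (G : SimpleGraph V) : V ⊕ Sym2 V → V ⊕ Sym2 V → Prop
  | Sum.inl v, Sum.inl w => G.Adj v w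
  | Sum.inl v, Sum.inr e => v ∈ e
  | Sum.inr e, Sum.inl v => v ∈ e
  | Sum.inr e, Sum.inr f => ∃ u, u ∈ e ∧ u ∈ f

/-- S ⊆ V ∪ E is a mixed dominating set of G. -/
def IsMixedDomSet {V : Type*} (G : SimpleGraph V) (S : Set (V ⊕ Sym2 V)) : Prop :=
  (∀ e : Sym2 V, Sum.inr e ∈ S → e ∈ G.edgeSet) ∧
  (∀ v : V, Sum.inl v ∉ S → ∃ s ∈ S, touches G (Sum.inl v) s) ∧
  (∀ e ∈ G.edgeSet, Sum.inr e ∉ S → ∃ s ∈ S, touches G (Sum.inr e) s)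

/-- The mixed domination number γ_m(G). -/
noncomputable def mixedDomNum (V : Type*) [Fintype V] [DecidableEq V]
    (G : SimpleGraph V) : ℕ :=
  sInf {n | ∃ S : Finset (V ⊕ Sym2 V), IsMixedDomSet G ↑S ∧ S.card = n}

/-- The parallel operation: identify `s₂` with `s₁` and `t₂` with `t₁`. -/
def parallelOp {V₁ V₂ : Type*} [DecidableEq V₂] (G₁ : SimpleGraph V₁) (G₂ : SimpleGraph V₂)
    (s₁ t₁ : V₁) (s₂ t₂ : V₂) : SimpleGraph (V₁ ⊕ {v : V₂ // v ≠ s₂ ∧ v ≠ t₂}) :=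
  SimpleGraph.fromRel (fun x y =>
    match x, y with
    | Sum.inl a, Sum.inl b => G₁.Adj a b ∨ (a = s₁ ∧ b = t₁ ∧ G₂.Adj s₂ t₂)
    | Sum.inr a, Sum.inr b => G₂.Adj a.1 b.1
    | Sum.inl a, Sum.inr b => (a = s₁ ∧ G₂.Adj s₂ b.1) ∨ (a = t₁ ∧ G₂.Adj t₂ b.1)
    | Sum.inr _, Sum.inl _ => False)


/-!
A homomorphism `φ : G →g H` maps vertices to vertices and edges to edges, and it maps touching
elements to touching elements. Hence if every vertex and every edge of `H` is the image of a vertex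
or an edge of `G₁` or of `G₂` under homomorphisms `φ₁`, `φ₂`, the images of mixed dominating sets
of `G₁` and `G₂` together dominate `H`. The parallel composition is covered in this way by `G₁`
(included as is) and `G₂` (sending `s₂ ↦ s₁` and `t₂ ↦ t₁`).
-/

open SimpleGraph

def elemMap {V W : Type*} (φ : V → W) : V ⊕ Sym2 V → W ⊕ Sym2 W :=
  Sum.map φ (Sym2.map φ)

section Hom

variable {V W : Type*} {G : SimpleGraph V} {H : SimpleGraph W} (φ : G →g H)

theorem touches.map {x y : V ⊕ Sym2 V} (h : touches G x y) :
    touches H (elemMap φ x) (elemMap φ y) := by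
  rcases x with v | e <;> rcases y with w | f
  · exact φ.map_adj h
  · exact Sym2.mem_map.2 ⟨v, h, rfl⟩
  · exact Sym2.mem_map.2 ⟨w, h, rfl⟩
  · obtain ⟨u, hue, huf⟩ := h
    exact ⟨φ u, Sym2.mem_map.2 ⟨u, hue, rfl⟩, Sym2.mem_map.2 ⟨u, huf, rfl⟩⟩

variable {φ} {S : Set (V ⊕ Sym2 V)} {T : Set (W ⊕ Sym2 W)}

theorem IsMixedDomSet.mem_edgeSet_of_mem_image (hS : IsMixedDomSet G S) {e : Sym2 W}
    (he : Sum.inr e ∈ elemMap φ '' S) : e ∈ H.edgeSet := by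
  obtain ⟨v | e', hx, hxe⟩ := he
  · cases hxe
  · obtain rfl := Sum.inr_injective hxe
    exact φ.map_mem_edgeSet (hS.1 e' hx)

theorem IsMixedDomSet.exists_touches_map_vertex (hS : IsMixedDomSet G S)
    (hST : elemMap φ '' S ⊆ T) {v : V} (hvT : Sum.inl (φ v) ∉ T) :
    ∃ t ∈ T, touches H (Sum.inl (φ v)) t := by
  have hvS : Sum.inl v ∉ S := fun hv => hvT (hST ⟨_, hv, rfl⟩)
  obtain ⟨s, hs, hvs⟩ := hS.2.1 v hvS
  exact ⟨elemMap φ s, hST ⟨s, hs, rfl⟩, hvs.map φ⟩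

theorem IsMixedDomSet.exists_touches_map_edge (hS : IsMixedDomSet G S)
    (hST : elemMap φ '' S ⊆ T) {e : Sym2 V} (he : e ∈ G.edgeSet)
    (heT : Sum.inr (e.map φ) ∉ T) : ∃ t ∈ T, touches H (Sum.inr (e.map φ)) t := by
  have heS : Sum.inr e ∉ S := fun h => heT (hST ⟨_, h, rfl⟩)
  obtain ⟨s, hs, hes⟩ := hS.2.2 e he heS
  exact ⟨elemMap φ s, hST ⟨s, hs, rfl⟩, hes.map φ⟩

end Hom

section Cover

variable {V₁ V₂ W : Type*} {G₁ : SimpleGraph V₁} {G₂ : SimpleGraph V₂} {H : SimpleGraph W}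

theorem IsMixedDomSet.image_union (φ₁ : G₁ →g H) (φ₂ : G₂ →g H)
    (hV : Set.range φ₁ ∪ Set.range φ₂ = Set.univ)
    (hE : H.edgeSet ⊆ Sym2.map φ₁ '' G₁.edgeSet ∪ Sym2.map φ₂ '' G₂.edgeSet)
    {S₁ : Set (V₁ ⊕ Sym2 V₁)} {S₂ : Set (V₂ ⊕ Sym2 V₂)}
    (hS₁ : IsMixedDomSet G₁ S₁) (hS₂ : IsMixedDomSet G₂ S₂) :
    IsMixedDomSet H (elemMap φ₁ '' S₁ ∪ elemMap φ₂ '' S₂) := by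
  refine ⟨?_, ?_, ?_⟩
  · rintro e (he | he)
    exacts [hS₁.mem_edgeSet_of_mem_image he, hS₂.mem_edgeSet_of_mem_image he]
  · intro w hw
    rcases Set.eq_univ_iff_forall.1 hV w with ⟨v, rfl⟩ | ⟨v, rfl⟩
    exacts [hS₁.exists_touches_map_vertex Set.subset_union_left hw,
      hS₂.exists_touches_map_vertex Set.subset_union_right hw]
  · intro e he heT
    rcases hE he with ⟨e', he', rfl⟩ | ⟨e', he', rfl⟩
    exacts [hS₁.exists_touches_map_edge Set.subset_union_left he' heT,
      hS₂.exists_touches_map_edge Set.subset_union_right he' heT]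

theorem exists_isMixedDomSet_card_eq_mixedDomNum (V : Type*) [Fintype V] [DecidableEq V]
    (G : SimpleGraph V) :
    ∃ S : Finset (V ⊕ Sym2 V), IsMixedDomSet G ↑S ∧ S.card = mixedDomNum V G := by
  have hVdom : IsMixedDomSet G ↑(Finset.univ.image (Sum.inl : V → V ⊕ Sym2 V)) := by
    refine ⟨by simp, by simp, fun e _ _ => ⟨Sum.inl e.out.1, by simp, Sym2.out_fst_mem e⟩⟩
  exact Nat.sInf_mem (s := {n | ∃ S : Finset (V ⊕ Sym2 V), IsMixedDomSet G ↑S ∧ S.card = n})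
    ⟨_, _, hVdom, rfl⟩

theorem mixedDomNum_le_add_of_cover [Fintype V₁] [DecidableEq V₁] [Fintype V₂] [DecidableEq V₂]
    [Fintype W] [DecidableEq W] (φ₁ : G₁ →g H) (φ₂ : G₂ →g H)
    (hV : Set.range φ₁ ∪ Set.range φ₂ = Set.univ)
    (hE : H.edgeSet ⊆ Sym2.map φ₁ '' G₁.edgeSet ∪ Sym2.map φ₂ '' G₂.edgeSet) :
    mixedDomNum W H ≤ mixedDomNum V₁ G₁ + mixedDomNum V₂ G₂ := by
  obtain ⟨S₁, hS₁, hc₁⟩ := exists_isMixedDomSet_card_eq_mixedDomNum V₁ G₁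
  obtain ⟨S₂, hS₂, hc₂⟩ := exists_isMixedDomSet_card_eq_mixedDomNum V₂ G₂
  rw [← hc₁, ← hc₂]
  let S := S₁.image (elemMap φ₁) ∪ S₂.image (elemMap φ₂)
  have hS : IsMixedDomSet H ↑S := by
    simpa [S] using hS₁.image_union φ₁ φ₂ hV hE hS₂
  calc mixedDomNum W H ≤ S.card := Nat.sInf_le ⟨S, hS, rfl⟩
    _ ≤ S₁.card + S₂.card :=
      (Finset.card_union_le _ _).trans (add_le_add Finset.card_image_le Finset.card_image_le)

end Cover

namespace parallelOp

variable {V₁ V₂ : Type*} [DecidableEq V₂] (s₁ t₁ : V₁) {s₂ t₂ : V₂}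

def rightMap (v : V₂) : V₁ ⊕ {v : V₂ // v ≠ s₂ ∧ v ≠ t₂} :=
  if hs : v = s₂ then Sum.inl s₁ else if ht : v = t₂ then Sum.inl t₁ else Sum.inr ⟨v, hs, ht⟩

@[simp]
theorem rightMap_source : rightMap s₁ t₁ s₂ = (Sum.inl s₁ : V₁ ⊕ {v : V₂ // v ≠ s₂ ∧ v ≠ t₂}) :=
  dif_pos rfl

@[simp]
theorem rightMap_target (h₂ : s₂ ≠ t₂) :
    rightMap s₁ t₁ t₂ = (Sum.inl t₁ : V₁ ⊕ {v : V₂ // v ≠ s₂ ∧ v ≠ t₂}) := by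
  simp [rightMap, h₂.symm]

@[simp]
theorem rightMap_val (v : {v : V₂ // v ≠ s₂ ∧ v ≠ t₂}) : rightMap s₁ t₁ v.1 = Sum.inr v := by
  simp [rightMap, v.2.1, v.2.2]

variable {s₁ t₁}

theorem rightMap_injective (h₁ : s₁ ≠ t₁) :
    Function.Injective (rightMap s₁ t₁ (s₂ := s₂) (t₂ := t₂)) := by
  intro a b hab
  unfold rightMap at hab
  split_ifs at hab <;> simp_all

variable (G₁ : SimpleGraph V₁) (G₂ : SimpleGraph V₂)

def leftHom (s₁ t₁ : V₁) (s₂ t₂ : V₂) : G₁ →g parallelOp G₁ G₂ s₁ t₁ s₂ t₂ where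
  toFun := Sum.inl
  map_rel' h := by simp [parallelOp, h, h.ne]

def rightHom (s₂ t₂ : V₂) (h₁ : s₁ ≠ t₁) : G₂ →g parallelOp G₁ G₂ s₁ t₁ s₂ t₂ where
  toFun := rightMap s₁ t₁
  map_rel' {a b} h := by
    refine (fromRel_adj _ _ _).2 ⟨(rightMap_injective h₁).ne h.ne, ?_⟩
    unfold rightMap
    split_ifs <;> subst_vars <;> simp_all [h.symm]

theorem adj_cases (h₂ : s₂ ≠ t₂) {x y : V₁ ⊕ {v : V₂ // v ≠ s₂ ∧ v ≠ t₂}}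
    (h : (parallelOp G₁ G₂ s₁ t₁ s₂ t₂).Adj x y) :
    (∃ a b, G₁.Adj a b ∧ Sum.inl a = x ∧ Sum.inl b = y) ∨
      ∃ a b, G₂.Adj a b ∧ rightMap s₁ t₁ a = x ∧ rightMap s₁ t₁ b = y := by
  rw [parallelOp, fromRel_adj] at h
  obtain ⟨-, h⟩ := h
  rcases x with a | a <;> rcases y with b | b <;> simp only at h
  · rcases h with (h | ⟨rfl, rfl, h⟩) | (h | ⟨rfl, rfl, h⟩)
    · exact .inl ⟨_, _, h, rfl, rfl⟩
    · exact .inr ⟨_, _, h, by simp, by simp [h₂]⟩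
    · exact .inl ⟨_, _, h.symm, rfl, rfl⟩
    · exact .inr ⟨_, _, h.symm, by simp [h₂], by simp⟩
  · rcases h with (⟨rfl, h⟩ | ⟨rfl, h⟩) | h
    · exact .inr ⟨_, _, h, by simp, by simp⟩
    · exact .inr ⟨_, _, h, by simp [h₂], by simp⟩
    · exact h.elim
  · rcases h with h | (⟨rfl, h⟩ | ⟨rfl, h⟩)
    · exact h.elim
    · exact .inr ⟨_, _, h.symm, by simp, by simp⟩
    · exact .inr ⟨_, _, h.symm, by simp, by simp [h₂]⟩
  · exact .inr ⟨_, _, h.elim id (·.symm), by simp, by simp⟩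

theorem range_leftHom_union_range_rightHom (h₁ : s₁ ≠ t₁) :
    Set.range (leftHom G₁ G₂ s₁ t₁ s₂ t₂) ∪ Set.range (rightHom G₁ G₂ s₂ t₂ h₁) = Set.univ := by
  refine Set.eq_univ_of_forall fun x => ?_
  rcases x with a | b
  exacts [.inl ⟨a, rfl⟩, .inr ⟨b.1, rightMap_val s₁ t₁ b⟩]

theorem edgeSet_subset_image_union (h₁ : s₁ ≠ t₁) (h₂ : s₂ ≠ t₂) :
    (parallelOp G₁ G₂ s₁ t₁ s₂ t₂).edgeSet ⊆
      Sym2.map (leftHom G₁ G₂ s₁ t₁ s₂ t₂) '' G₁.edgeSet ∪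
        Sym2.map (rightHom G₁ G₂ s₂ t₂ h₁) '' G₂.edgeSet := by
  intro e he
  induction e using Sym2.ind with
  | _ x y =>
    rcases adj_cases G₁ G₂ h₂ he with ⟨a, b, hab, rfl, rfl⟩ | ⟨a, b, hab, rfl, rfl⟩
    exacts [.inl ⟨s(a, b), hab, rfl⟩, .inr ⟨s(a, b), hab, rfl⟩]

end parallelOp

theorem stmt_11 {V₁ V₂ : Type*} [Fintype V₁] [DecidableEq V₁] [Fintype V₂] [DecidableEq V₂]
    (G₁ : SimpleGraph V₁) (G₂ : SimpleGraph V₂) (s₁ t₁ : V₁) (s₂ t₂ : V₂)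
    (h₁ : s₁ ≠ t₁) (h₂ : s₂ ≠ t₂) :
    mixedDomNum (V₁ ⊕ {v : V₂ // v ≠ s₂ ∧ v ≠ t₂}) (parallelOp G₁ G₂ s₁ t₁ s₂ t₂) ≤
      mixedDomNum V₁ G₁ + mixedDomNum V₂ G₂ :=
  mixedDomNum_le_add_of_cover (parallelOp.leftHom G₁ G₂ s₁ t₁ s₂ t₂)
    (parallelOp.rightHom G₁ G₂ s₂ t₂ h₁)
    (parallelOp.range_leftHom_union_range_rightHom G₁ G₂ h₁)
    (parallelOp.edgeSet_subset_image_union G₁ G₂ h₁ h₂)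
end

section
/- For any graph G and edge e = uv ∈ E(G), if S is a mixed dominating set of G − e, then S ∪ {u} is a mixed dominating set of G; hence γ_m(G) ≤ γ_m(G − e) + 1. -/
lemma touches_mono {V : Type*} {G G' : SimpleGraph V} (h : G' ≤ G) :
    ∀ a b, touches G' a b → touches G a b := by
  rintro (v | f) (w | g) ht
  · exact h ht
  · exact ht
  · exact ht
  · exact ht

theorem stmt_16 {V : Type*} [Fintype V] [DecidableEq V] (G : SimpleGraph V)
    (e : Sym2 V) (he : e ∈ G.edgeSet) (u : V) (hu : u ∈ e) :
    (∀ S : Set (V ⊕ Sym2 V), IsMixedDomSet (G.deleteEdges {e}) S →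
      IsMixedDomSet G (insert (Sum.inl u) S)) ∧
    mixedDomNum V G ≤ mixedDomNum V (G.deleteEdges {e}) + 1 := by
  have hle : G.deleteEdges {e} ≤ G := SimpleGraph.deleteEdges_le _
  have hmain : ∀ S : Set (V ⊕ Sym2 V), IsMixedDomSet (G.deleteEdges {e}) S →
      IsMixedDomSet G (insert (Sum.inl u) S) := by
    rintro S ⟨h1, h2, h3⟩
    refine ⟨?_, ?_, ?_⟩
    · intro f hf
      rcases hf with hf | hf
      · exact absurd hf (by simp)
      · exact SimpleGraph.edgeSet_mono hle (h1 f hf)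
    · intro v hv
      have hvS : Sum.inl v ∉ S := fun h => hv (Set.mem_insert_of_mem _ h)
      obtain ⟨s, hs, hts⟩ := h2 v hvS
      exact ⟨s, Set.mem_insert_of_mem _ hs, touches_mono hle _ _ hts⟩
    · intro f hf hfS
      by_cases hfe : f = e
      · subst hfe
        exact ⟨Sum.inl u, Set.mem_insert _ _, hu⟩
      · have hf' : f ∈ (G.deleteEdges {e}).edgeSet := by
          rw [SimpleGraph.edgeSet_deleteEdges]
          exact ⟨hf, by simpa using hfe⟩
        have hns : Sum.inr f ∉ S := fun h => hfS (Set.mem_insert_of_mem _ h)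
        obtain ⟨s, hs, hts⟩ := h3 f hf' hns
        exact ⟨s, Set.mem_insert_of_mem _ hs, touches_mono hle _ _ hts⟩
  refine ⟨hmain, ?_⟩
  have hne : {n | ∃ S : Finset (V ⊕ Sym2 V),
      IsMixedDomSet (G.deleteEdges {e}) ↑S ∧ S.card = n}.Nonempty := by
    refine ⟨_, (Finset.univ : Finset V).image Sum.inl, ⟨?_, ?_, ?_⟩, rfl⟩
    · intro f hf; simp at hf
    · intro v hv; simp at hv
    · intro f hf hfS
      induction f using Sym2.ind with
      | _ x y =>
        refine ⟨Sum.inl x, by simp, ?_⟩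
        show x ∈ s(x, y)
        simp
  obtain ⟨T, hT, hTcard⟩ := Nat.sInf_mem hne
  have hins : IsMixedDomSet G ↑(insert (Sum.inl u) T) := by
    have := hmain ↑T hT
    rw [Finset.coe_insert]
    exact this
  calc mixedDomNum V G ≤ (insert (Sum.inl u) T).card := Nat.sInf_le ⟨_, hins, rfl⟩
    _ ≤ T.card + 1 := Finset.card_insert_le _ _
    _ = mixedDomNum V (G.deleteEdges {e}) + 1 := by rw [hTcard]; rfl
end
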